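/- arXiv:1706.09001 — 2 statements merged into one kernel-verified Lean document; each statement's English description precedes it below -/
import Mathlib

section
/- If g is analytic on 𝔻 with lim_{|z|→1}(1−|z|)|g(z)| = 0, and f is analytic with sup_{0≤r<1}(1−r)^{α−1}M_p(r,f) < ∞, then lim_{r→1}(1−r)^α M_p(r, g·f) = 0. -/
open Complex Metric Set Filter

noncomputable def Mp (p r : ℝ) (f : ℂ → ℂ) : ℝ :=
  ((1 / (2 * Real.pi)) * ∫ θ in (0:ℝ)..(2 * Real.pi),
    ‖f ((r : ℂ) * Complex.exp (θ * Complex.I))‖ ^ p) ^ (1 / p)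

lemma Mp_nonneg (p r : ℝ) (f : ℂ → ℂ) : 0 ≤ Mp p r f := by
  apply Real.rpow_nonneg
  apply mul_nonneg
  · positivity
  · apply intervalIntegral.integral_nonneg (by positivity)
    intro θ _
    positivity

lemma circle_mem (r : ℝ) (hr0 : 0 ≤ r) (hr1 : r < 1) (θ : ℝ) :
    (r : ℂ) * Complex.exp (θ * Complex.I) ∈ ball (0:ℂ) 1 := by
  simp only [mem_ball, dist_zero_right, norm_mul]
  have h1 : ‖Complex.exp (θ * Complex.I)‖ = 1 := by
    rw [Complex.norm_exp]
    simp
  rw [h1, mul_one, Complex.norm_real, Real.norm_eq_abs, _root_.abs_of_nonneg hr0]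
  exact hr1

lemma Mp_mul_le (p : ℝ) (hp : 1 ≤ p) (r C : ℝ) (hr0 : 0 ≤ r) (hr1 : r < 1) (hC : 0 ≤ C)
    (g f : ℂ → ℂ)
    (hg : DifferentiableOn ℂ g (ball (0:ℂ) 1))
    (hf : DifferentiableOn ℂ f (ball (0:ℂ) 1))
    (hgC : ∀ θ : ℝ, ‖g ((r : ℂ) * Complex.exp (θ * Complex.I))‖ ≤ C) :
    Mp p r (fun z => g z * f z) ≤ C * Mp p r f := by
  have hp0 : 0 < p := lt_of_lt_of_le one_pos hp
  have hc : Continuous fun θ : ℝ => (r : ℂ) * Complex.exp (θ * Complex.I) := by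
    fun_prop
  have hmem := circle_mem r hr0 hr1
  have hfc : Continuous fun θ : ℝ => f ((r : ℂ) * Complex.exp (θ * Complex.I)) :=
    hf.continuousOn.comp_continuous hc hmem
  have hgc : Continuous fun θ : ℝ => g ((r : ℂ) * Complex.exp (θ * Complex.I)) :=
    hg.continuousOn.comp_continuous hc hmem
  have hF : Continuous fun θ : ℝ => ‖f ((r : ℂ) * Complex.exp (θ * Complex.I))‖ ^ p :=
    hfc.norm.rpow_const (fun θ => Or.inr hp0.le)
  have hGF : Continuous fun θ : ℝ =>
      ‖g ((r : ℂ) * Complex.exp (θ * Complex.I)) * f ((r : ℂ) * Complex.exp (θ * Complex.I))‖ ^ p :=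
    ((hgc.mul hfc).norm.rpow_const (fun θ => Or.inr hp0.le))
  have hint : (∫ θ in (0:ℝ)..(2 * Real.pi),
      ‖g ((r : ℂ) * Complex.exp (θ * Complex.I)) * f ((r : ℂ) * Complex.exp (θ * Complex.I))‖ ^ p)
      ≤ ∫ θ in (0:ℝ)..(2 * Real.pi),
      C ^ p * ‖f ((r : ℂ) * Complex.exp (θ * Complex.I))‖ ^ p := by
    apply intervalIntegral.integral_mono (by positivity)
      (hGF.intervalIntegrable _ _) ((continuous_const.mul hF).intervalIntegrable _ _)
    intro θ
    dsimp only
    rw [norm_mul, Real.mul_rpow (norm_nonneg _) (norm_nonneg _)]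
    apply mul_le_mul_of_nonneg_right _ (by positivity)
    exact Real.rpow_le_rpow (norm_nonneg _) (hgC θ) hp0.le
  have hI2 : (0:ℝ) ≤ ∫ θ in (0:ℝ)..(2 * Real.pi),
      ‖f ((r : ℂ) * Complex.exp (θ * Complex.I))‖ ^ p := by
    apply intervalIntegral.integral_nonneg (by positivity)
    intro θ _; positivity
  unfold Mp
  calc (((1:ℝ) / (2 * Real.pi)) * ∫ θ in (0:ℝ)..(2 * Real.pi),
        ‖(fun z => g z * f z) ((r : ℂ) * Complex.exp (θ * Complex.I))‖ ^ p) ^ (1 / p)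
      ≤ (((1:ℝ) / (2 * Real.pi)) * ∫ θ in (0:ℝ)..(2 * Real.pi),
        C ^ p * ‖f ((r : ℂ) * Complex.exp (θ * Complex.I))‖ ^ p) ^ (1 / p) := by
        apply Real.rpow_le_rpow
        · apply mul_nonneg (by positivity)
          apply intervalIntegral.integral_nonneg (by positivity)
          intro θ _; positivity
        · exact mul_le_mul_of_nonneg_left hint (by positivity)
        · positivity
    _ = C * (((1:ℝ) / (2 * Real.pi)) * ∫ θ in (0:ℝ)..(2 * Real.pi),
        ‖f ((r : ℂ) * Complex.exp (θ * Complex.I))‖ ^ p) ^ (1 / p) := by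
        rw [intervalIntegral.integral_const_mul, show ((1:ℝ) / (2 * Real.pi)) * (C ^ p *
          ∫ θ in (0:ℝ)..(2 * Real.pi), ‖f ((r : ℂ) * Complex.exp (θ * Complex.I))‖ ^ p)
          = C ^ p * (((1:ℝ) / (2 * Real.pi)) * ∫ θ in (0:ℝ)..(2 * Real.pi),
          ‖f ((r : ℂ) * Complex.exp (θ * Complex.I))‖ ^ p) by ring,
          Real.mul_rpow (by positivity) (by positivity),
          ← Real.rpow_mul hC, mul_one_div_cancel hp0.ne', Real.rpow_one]

/-- if `(1−|z|)|g(z)| → 0` as `|z| → 1` and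
`sup_{0≤r<1}(1−r)^{α−1}M_p(r,f) < ∞`, then `(1−r)^α M_p(r, g·f) → 0` as `r → 1⁻`. -/
theorem stmt2 (p α : ℝ) (hp : 1 ≤ p) (hα : 0 < α)
    (g f : ℂ → ℂ)
    (hg : DifferentiableOn ℂ g (ball (0:ℂ) 1))
    (hf : DifferentiableOn ℂ f (ball (0:ℂ) 1))
    (hg0 : ∀ ε > (0:ℝ), ∃ R < (1:ℝ), ∀ z ∈ ball (0:ℂ) 1, R < ‖z‖ → (1 - ‖z‖) * ‖g z‖ < ε)
    (hfb : ∃ B, ∀ r ∈ Ico (0:ℝ) 1, (1 - r) ^ (α - 1) * Mp p r f ≤ B) :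
    Tendsto (fun r => (1 - r) ^ α * Mp p r (fun z => g z * f z))
      (nhdsWithin 1 (Iio 1)) (nhds 0) := by
  obtain ⟨B, hB⟩ := hfb
  have hB0 : 0 ≤ B := by
    have h0 := hB 0 ⟨le_refl _, one_pos⟩
    refine le_trans ?_ h0
    have := Mp_nonneg p 0 f
    positivity
  rw [NormedAddCommGroup.tendsto_nhds_zero]
  intro ε' hε'
  set ε : ℝ := ε' / (B + 1) with hεdef
  have hε : 0 < ε := by positivity
  obtain ⟨R, hR1, hR⟩ := hg0 ε hε
  have hm1 : max R 0 < 1 := max_lt hR1 one_pos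
  filter_upwards [Ioo_mem_nhdsLT_of_mem (show (1:ℝ) ∈ Ioc (max R 0) 1 from ⟨hm1, le_refl _⟩)]
    with r hr
  obtain ⟨hrm, hr1⟩ := hr
  have hr0 : 0 ≤ r := le_of_lt (lt_of_le_of_lt (le_max_right R 0) hrm)
  have hrR : R < r := lt_of_le_of_lt (le_max_left R 0) hrm
  have h1r : 0 < 1 - r := by linarith
  -- bound g on the circle
  have hgC : ∀ θ : ℝ, ‖g ((r : ℂ) * Complex.exp (θ * Complex.I))‖ ≤ ε / (1 - r) := by
    intro θ
    have hmem := circle_mem r hr0 hr1 θ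
    have hnorm : ‖(r : ℂ) * Complex.exp (θ * Complex.I)‖ = r := by
      have h1 : ‖Complex.exp (θ * Complex.I)‖ = 1 := by
        rw [Complex.norm_exp]
        simp
      rw [norm_mul, h1, mul_one, Complex.norm_real, Real.norm_eq_abs, _root_.abs_of_nonneg hr0]
    have := hR _ hmem (by rw [hnorm]; exact hrR)
    rw [hnorm] at this
    rw [le_div_iff₀ h1r, mul_comm]
    exact this.le
  have hkey := Mp_mul_le p hp r (ε / (1 - r)) hr0 hr1 (by positivity) g f hg hf hgC
  have hMp0 := Mp_nonneg p r (fun z => g z * f z)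
  have hMpf0 := Mp_nonneg p r f
  have hpow : (0:ℝ) ≤ (1 - r) ^ α := Real.rpow_nonneg h1r.le α
  rw [Real.norm_eq_abs, _root_.abs_of_nonneg (mul_nonneg hpow hMp0)]
  calc (1 - r) ^ α * Mp p r (fun z => g z * f z)
      ≤ (1 - r) ^ α * (ε / (1 - r) * Mp p r f) :=
        mul_le_mul_of_nonneg_left hkey hpow
    _ = ε * ((1 - r) ^ (α - 1) * Mp p r f) := by
        rw [show α = (α - 1) + 1 by ring, Real.rpow_add h1r, Real.rpow_one]
        field_simp
        ring
    _ ≤ ε * B := mul_le_mul_of_nonneg_left (hB r ⟨hr0, hr1⟩) hε.le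
    _ < ε' := by
        rw [hεdef, div_mul_eq_mul_div, div_lt_iff₀ (by positivity)]
        nlinarith
end

section
/- For 1 ≤ p ≤ ∞, 0 < α < ∞, and any z ∈ 𝔻, the function f_z(w) = (1−|z|²)^{α+1/p}/(1−z̄w)^{2(α+1/p)} is analytic on 𝔻, satisfies |f_z(z)| = (1−|z|²)^{−(α+1/p)}, and sup_{0≤r<1}(1−r)^α M_p(r, f_z) ≤ C for a constant C independent of z. -/
open Complex Metric Set

/-- The test function `f_z(w) = (1−|z|²)^{α+1/p}/(1−z̄w)^{2(α+1/p)}`. -/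
noncomputable def testFn (p α : ℝ) (z w : ℂ) : ℂ :=
  ((1 - ‖z‖ ^ 2 : ℝ) : ℂ) ^ ((α + 1 / p : ℝ) : ℂ) /
    (1 - (starRingEnd ℂ) z * w) ^ ((2 * (α + 1 / p) : ℝ) : ℂ)

/- ## Auxiliary lemmas -/

open Real intervalIntegral in
noncomputable def Fa (β a : ℝ) (θ : ℝ) : ℝ := ‖1 - (a:ℂ) * Complex.exp (θ * Complex.I)‖ ^ (-β)

lemma lower1 (a θ : ℝ) (ha : 0 ≤ a) : 1 - a ≤ ‖1 - (a:ℂ) * Complex.exp (θ * Complex.I)‖ := by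
  have h := norm_sub_norm_le (1:ℂ) ((a:ℂ) * Complex.exp (θ * Complex.I))
  have : ‖(a:ℂ) * Complex.exp (θ * Complex.I)‖ = a := by
    simp [Complex.norm_exp_ofReal_mul_I, Complex.norm_real,
      _root_.abs_of_nonneg ha]
  rw [this] at h
  simpa using h

lemma Fa_cont (β a : ℝ) (ha : 0 ≤ a) (ha1 : a < 1) : Continuous (Fa β a) := by
  apply Continuous.rpow_const
  · continuity
  · intro θ
    left
    have := lower1 a θ ha
    intro h; rw [h] at this; linarith

lemma Fa_symm (β a θ : ℝ) : Fa β a (2 * Real.pi - θ) = Fa β a θ := by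
  unfold Fa
  congr 1
  have h1 : Complex.exp (((2 * Real.pi - θ) : ℝ) * Complex.I)
      = Complex.exp (-(θ * Complex.I)) := by
    have : ((2 * Real.pi - θ) : ℝ) * Complex.I = -(θ * Complex.I) + 2 * Real.pi * Complex.I := by
      push_cast; ring
    rw [this, Complex.exp_add, Complex.exp_two_pi_mul_I, mul_one]
  rw [h1]
  have : (1 : ℂ) - (a:ℂ) * Complex.exp (-(θ * Complex.I))
      = (starRingEnd ℂ) (1 - (a:ℂ) * Complex.exp (θ * Complex.I)) := by
    simp only [map_sub, map_one, map_mul, Complex.conj_ofReal]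
    congr 1
    rw [← Complex.exp_conj]
    congr 1
    simp [Complex.conj_ofReal]
  rw [this, RCLike.norm_conj]

lemma Fa_periodic (β a : ℝ) : Function.Periodic (Fa β a) (2 * Real.pi) := by
  intro θ
  unfold Fa
  congr 3
  have : ((θ + 2*Real.pi : ℝ) : ℂ) * Complex.I = θ * Complex.I + 2 * Real.pi * Complex.I := by
    push_cast; ring
  rw [this, Complex.exp_add, Complex.exp_two_pi_mul_I, mul_one]

lemma lower2 (a θ : ℝ) (ha : 1/2 ≤ a) (hθ0 : 0 ≤ θ) (hθπ : θ ≤ Real.pi) :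
    (Real.sqrt 2 / Real.pi) * θ ≤ ‖1 - (a:ℂ) * Complex.exp (θ * Complex.I)‖ := by
  have hπ := Real.pi_pos
  have hs : Real.sin (θ/2) ^ 2 = 1/2 - Real.cos θ / 2 := by
    have := Real.sin_sq_eq_half_sub (θ/2)
    rw [show 2 * (θ/2) = θ by ring] at this
    simpa using this
  have hnsq : ‖1 - (a:ℂ) * Complex.exp (θ * Complex.I)‖ ^ 2
      = (1 - a)^2 + 4 * a * Real.sin (θ/2) ^ 2 := by
    have h1 : ‖1 - (a:ℂ) * Complex.exp (θ * Complex.I)‖ ^ 2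
        = Complex.normSq (1 - (a:ℂ) * Complex.exp (θ * Complex.I)) := by
      rw [Complex.sq_norm]
    rw [h1, Complex.exp_mul_I]
    simp [Complex.normSq_apply, Complex.cos_ofReal_re, Complex.sin_ofReal_re, hs]
    ring_nf
    nlinarith [Real.sin_sq_add_cos_sq θ, hs]
  have hj : θ / Real.pi ≤ Real.sin (θ/2) := by
    have := Real.mul_le_sin (x := θ/2) (by linarith) (by linarith)
    calc θ / Real.pi = 2 / Real.pi * (θ/2) := by ring
    _ ≤ _ := this
  have hθπ' : 0 ≤ θ / Real.pi := by positivity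
  have h2 : (θ / Real.pi)^2 ≤ Real.sin (θ/2)^2 := pow_le_pow_left₀ hθπ' hj 2
  have hsqrt2 : Real.sqrt 2 ^ 2 = 2 := Real.sq_sqrt (by norm_num)
  have e1 : ((Real.sqrt 2 / Real.pi) * θ)^2 = 2 * (θ / Real.pi)^2 := by
    field_simp; nlinarith [hsqrt2]
  have hsq : ((Real.sqrt 2 / Real.pi) * θ)^2 ≤ ‖1 - (a:ℂ) * Complex.exp (θ * Complex.I)‖ ^ 2 := by
    rw [hnsq, e1]
    nlinarith [sq_nonneg (1-a), sq_nonneg (θ/Real.pi)]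
  nlinarith [norm_nonneg (1 - (a:ℂ) * Complex.exp (θ * Complex.I)),
    mul_nonneg (mul_nonneg (Real.sqrt_nonneg 2) (le_of_lt (inv_pos.mpr hπ))) hθ0]

open Real intervalIntegral in
lemma key (β : ℝ) (hβ : 1 < β) (a : ℝ) (ha : 0 ≤ a) (ha1 : a < 1) :
    (∫ θ in (0:ℝ)..(2*Real.pi), Fa β a θ)
      ≤ (4*Real.pi + 2*(1 + (Real.sqrt 2/Real.pi)^(-β)/(β-1))) * (1-a)^(1-β) := by
  have hπ := Real.pi_pos
  set δ := 1 - a with hδdef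
  have hδ : 0 < δ := by simp [hδdef]; linarith
  have hδβ : 0 < δ ^ (1-β) := Real.rpow_pos_of_pos hδ _
  have hT : 0 ≤ (Real.sqrt 2/Real.pi)^(-β)/(β-1) :=
    div_nonneg (Real.rpow_nonneg (by positivity) _) (by linarith)
  have hInt : ∀ u v : ℝ, IntervalIntegrable (Fa β a) MeasureTheory.volume u v :=
    fun u v => (Fa_cont β a ha ha1).intervalIntegrable u v
  have hFbd : ∀ θ, Fa β a θ ≤ δ ^ (-β) :=
    fun θ => Real.rpow_le_rpow_of_nonpos hδ (lower1 a θ ha) (by linarith)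
  have hδinv : δ * δ ^ (-β) = δ ^ (1-β) := by
    rw [show (1:ℝ)-β = 1 + (-β) by ring, Real.rpow_add hδ, Real.rpow_one]
  rcases lt_or_ge a (1/2) with hcase | hcase
  · -- easy case: a < 1/2, so δ > 1/2
    have hbig : (∫ θ in (0:ℝ)..(2*Real.pi), Fa β a θ) ≤ 2*Real.pi * δ ^ (-β) := by
      have := intervalIntegral.integral_mono_on (by linarith : (0:ℝ) ≤ 2*Real.pi)
        (hInt 0 (2*Real.pi)) (intervalIntegrable_const) (fun x _ => hFbd x)
      simpa using this
    have h2 : δ ^ (-β) ≤ 2 * δ ^ (1-β) := by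
      have : δ ^ (-β) = δ⁻¹ * δ ^ (1-β) := by
        rw [show (-β:ℝ) = -1 + (1-β) by ring, Real.rpow_add hδ, Real.rpow_neg_one]
      rw [this]
      have : δ⁻¹ ≤ 2 := by
        rw [inv_le_comm₀ hδ (by norm_num)]
        linarith
      nlinarith
    nlinarith
  · -- main case: a ≥ 1/2, so δ ≤ 1/2
    have hδhalf : δ ≤ 1/2 := by simp [hδdef]; linarith
    have hδπ : δ ≤ Real.pi := by nlinarith [Real.pi_gt_three]
    have hsplit2 : (∫ θ in (0:ℝ)..(2*Real.pi), Fa β a θ)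
        = (∫ θ in (0:ℝ)..Real.pi, Fa β a θ) + ∫ θ in Real.pi..(2*Real.pi), Fa β a θ :=
      (integral_add_adjacent_intervals (hInt 0 Real.pi) (hInt Real.pi (2*Real.pi))).symm
    have hsymm : (∫ θ in Real.pi..(2*Real.pi), Fa β a θ) = ∫ θ in (0:ℝ)..Real.pi, Fa β a θ := by
      have h := intervalIntegral.integral_comp_sub_left (a := (0:ℝ)) (b := Real.pi)
        (Fa β a) (2*Real.pi)
      simp only [Fa_symm] at h
      rw [h]
      congr 1 <;> ring
    have hsplit1 : (∫ θ in (0:ℝ)..Real.pi, Fa β a θ)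
        = (∫ θ in (0:ℝ)..δ, Fa β a θ) + ∫ θ in δ..Real.pi, Fa β a θ :=
      (integral_add_adjacent_intervals (hInt 0 δ) (hInt δ Real.pi)).symm
    have hpart1 : (∫ θ in (0:ℝ)..δ, Fa β a θ) ≤ δ ^ (1-β) := by
      have := intervalIntegral.integral_mono_on hδ.le
        (hInt 0 δ) (intervalIntegrable_const) (fun x _ => hFbd x)
      simpa [hδinv] using this
    -- part 2
    have hk : (0:ℝ) < Real.sqrt 2 / Real.pi := by positivity
    set g : ℝ → ℝ := fun θ => ((Real.sqrt 2/Real.pi) * θ) ^ (-β) with hgdef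
    have hgcont : ContinuousOn g (uIcc δ Real.pi) := by
      have huicc : uIcc δ Real.pi = Icc δ Real.pi := uIcc_of_le hδπ
      intro x hx
      rw [huicc] at hx
      have hxpos : 0 < x := lt_of_lt_of_le hδ hx.1
      exact ((Real.continuousAt_rpow_const _ _
        (Or.inl (by positivity))).comp (by fun_prop)).continuousWithinAt
    have hgint : IntervalIntegrable g MeasureTheory.volume δ Real.pi :=
      hgcont.intervalIntegrable
    have hpart2a : (∫ θ in δ..Real.pi, Fa β a θ) ≤ ∫ θ in δ..Real.pi, g θ := by
      apply intervalIntegral.integral_mono_on hδπ (hInt δ Real.pi) hgint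
      intro x hx
      exact Real.rpow_le_rpow_of_nonpos (by nlinarith [hx.1])
        (lower2 a x hcase (le_trans hδ.le hx.1) hx.2) (by linarith)
    have hpart2b : (∫ θ in δ..Real.pi, g θ)
        = (Real.sqrt 2/Real.pi) ^ (-β) * ∫ θ in δ..Real.pi, (θ:ℝ) ^ (-β) := by
      rw [← intervalIntegral.integral_const_mul]
      apply intervalIntegral.integral_congr
      intro x hx
      rw [uIcc_of_le hδπ] at hx
      have hxpos : (0:ℝ) ≤ x := le_trans hδ.le hx.1
      simp only [hgdef]
      rw [Real.mul_rpow hk.le hxpos]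
    have hpart2c : (∫ θ in δ..Real.pi, (θ:ℝ) ^ (-β)) ≤ δ ^ (1-β) / (β-1) := by
      rw [integral_rpow (Or.inr ⟨by linarith, by
        rw [uIcc_of_le hδπ]; exact fun h => absurd h.1 (by linarith)⟩)]
      have hπβ : 0 < Real.pi ^ (-β+1) := Real.rpow_pos_of_pos hπ _
      have : (Real.pi ^ (-β+1) - δ ^ (-β+1)) / (-β+1)
          = (δ ^ (-β+1) - Real.pi ^ (-β+1)) / (β-1) := by
        rw [div_eq_div_iff (by linarith) (by linarith)]
        ring
      rw [this, show (-β+1 : ℝ) = 1-β by ring]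
      have hπβ' : 0 < Real.pi ^ ((1:ℝ)-β) := Real.rpow_pos_of_pos hπ _
      gcongr
      · linarith
    have hfinal : (∫ θ in δ..Real.pi, Fa β a θ)
        ≤ (Real.sqrt 2/Real.pi)^(-β)/(β-1) * δ^(1-β) := by
      have hknn : (0:ℝ) ≤ (Real.sqrt 2/Real.pi)^(-β) := Real.rpow_nonneg hk.le _
      calc (∫ θ in δ..Real.pi, Fa β a θ) ≤ ∫ θ in δ..Real.pi, g θ := hpart2a
      _ = (Real.sqrt 2/Real.pi) ^ (-β) * ∫ θ in δ..Real.pi, (θ:ℝ) ^ (-β) := hpart2b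
      _ ≤ (Real.sqrt 2/Real.pi) ^ (-β) * (δ ^ (1-β) / (β-1)) :=
          mul_le_mul_of_nonneg_left hpart2c hknn
      _ = (Real.sqrt 2/Real.pi)^(-β)/(β-1) * δ^(1-β) := by ring
    rw [hsplit2, hsymm, hsplit1]
    nlinarith [mul_pos hπ hδβ, hδβ, hpart1, hfinal]

open Real intervalIntegral in
lemma rot (β : ℝ) (c : ℂ) :
    (∫ θ in (0:ℝ)..(2*Real.pi), ‖1 - c * Complex.exp (θ * Complex.I)‖ ^ (-β))
      = ∫ θ in (0:ℝ)..(2*Real.pi), Fa β ‖c‖ θ := by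
  have hpt : ∀ θ : ℝ, ‖1 - c * Complex.exp (θ * Complex.I)‖ ^ (-β)
      = Fa β ‖c‖ (θ + Complex.arg c) := by
    intro θ
    unfold Fa
    congr 3
    rw [show ((θ + Complex.arg c : ℝ) : ℂ) * Complex.I
        = Complex.arg c * Complex.I + θ * Complex.I by push_cast; ring, Complex.exp_add]
    rw [← mul_assoc]
    congr 1
    rw [Complex.norm_mul_exp_arg_mul_I]
  simp_rw [hpt]
  rw [intervalIntegral.integral_comp_add_right (fun x => Fa β ‖c‖ x) (Complex.arg c)]
  have := (Fa_periodic β ‖c‖).intervalIntegral_add_eq (Complex.arg c) 0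
  simpa [add_comm] using this

lemma norm_testFn (p α : ℝ) (z w : ℂ) (hz : ‖z‖ < 1) :
    ‖testFn p α z w‖ = (1 - ‖z‖^2) ^ (α + 1/p)
      * ‖1 - (starRingEnd ℂ) z * w‖ ^ (-(2 * (α + 1/p))) := by
  have hx : (0:ℝ) < 1 - ‖z‖^2 := by nlinarith [norm_nonneg z]
  rw [testFn, norm_div]
  rw [Complex.norm_cpow_real, Complex.norm_cpow_real]
  rw [Complex.norm_real, Real.norm_eq_abs, _root_.abs_of_pos hx]
  rw [Real.rpow_neg (norm_nonneg _), div_eq_mul_inv]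

lemma norm_testFn_self (p α : ℝ) (z : ℂ) (hz : ‖z‖ < 1) :
    ‖testFn p α z z‖ = (1 - ‖z‖ ^ 2) ^ (-(α + 1 / p)) := by
  have hx : (0:ℝ) < 1 - ‖z‖^2 := by nlinarith [norm_nonneg z]
  rw [norm_testFn p α z z hz]
  have h1 : (1:ℂ) - (starRingEnd ℂ) z * z = ((1 - ‖z‖^2 : ℝ) : ℂ) := by
    rw [mul_comm, Complex.mul_conj']
    push_cast
    ring
  rw [h1]
  rw [Complex.norm_real, Real.norm_eq_abs, _root_.abs_of_pos hx, ← Real.rpow_add hx]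
  congr 1
  ring

lemma diff_testFn (p α : ℝ) (z : ℂ) (hz : ‖z‖ < 1) :
    DifferentiableOn ℂ (testFn p α z) (ball (0:ℂ) 1) := by
  intro w hw
  rw [mem_ball_zero_iff] at hw
  have hslit : (1 - (starRingEnd ℂ) z * w) ∈ Complex.slitPlane := by
    rw [Complex.mem_slitPlane_iff]
    left
    have h1 : ((starRingEnd ℂ) z * w).re ≤ ‖z‖ * ‖w‖ := by
      calc ((starRingEnd ℂ) z * w).re ≤ ‖(starRingEnd ℂ) z * w‖ :=
        Complex.re_le_norm _
      _ = ‖z‖ * ‖w‖ := by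
        rw [norm_mul, RCLike.norm_conj]
    have h2 : ‖z‖ * ‖w‖ < 1 := by nlinarith [norm_nonneg z, norm_nonneg w]
    simp only [Complex.sub_re, Complex.one_re, Complex.mul_re]
    have := Complex.re_le_norm ((starRingEnd ℂ) z * w)
    simp only [Complex.mul_re] at h1 ⊢
    linarith
  have hbase : DifferentiableAt ℂ (fun w => 1 - (starRingEnd ℂ) z * w) w :=
    (differentiableAt_const _).sub ((differentiableAt_const _).mul differentiableAt_id)
  have hden : DifferentiableAt ℂ
      (fun w => (1 - (starRingEnd ℂ) z * w) ^ ((2 * (α + 1 / p) : ℝ) : ℂ)) w :=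
    hbase.cpow (differentiableAt_const _) hslit
  have hne : (1 - (starRingEnd ℂ) z * w) ^ ((2 * (α + 1 / p) : ℝ) : ℂ) ≠ 0 := by
    intro h
    rw [Complex.cpow_eq_zero_iff] at h
    exact Complex.slitPlane_ne_zero hslit h.1
  exact (((differentiableAt_const _).div hden hne).differentiableWithinAt :
    DifferentiableWithinAt ℂ (testFn p α z) _ w)

set_option maxHeartbeats 1000000 in
/-- for each `z ∈ 𝔻`, `f_z` is analytic on `𝔻`,
`|f_z(z)| = (1−|z|²)^{−(α+1/p)}` and `sup_{0≤r<1}(1−r)^α M_p(r,f_z) ≤ C` with `C`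
independent of `z`. -/
theorem stmt3 (p α : ℝ) (hp : 1 ≤ p) (hα : 0 < α) :
    ∃ C > (0:ℝ), ∀ z ∈ ball (0:ℂ) 1,
      DifferentiableOn ℂ (testFn p α z) (ball (0:ℂ) 1) ∧
      ‖testFn p α z z‖ = (1 - ‖z‖ ^ 2) ^ (-(α + 1 / p)) ∧
      ∀ r ∈ Ico (0:ℝ) 1, (1 - r) ^ α * Mp p r (testFn p α z) ≤ C := by
  have hπ := Real.pi_pos
  have hp0 : 0 < p := lt_of_lt_of_le one_pos hp
  set s : ℝ := α + 1/p with hsdef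
  have hs : 0 < s := by positivity
  set β : ℝ := 2 * (s * p) with hβdef
  have hsp : s * p = α * p + 1 := by rw [hsdef]; field_simp
  have hβ : 1 < β := by
    rw [hβdef, hsp]
    nlinarith [mul_pos hα hp0]
  set C0 : ℝ := 4*Real.pi + 2*(1 + (Real.sqrt 2/Real.pi)^(-β)/(β-1)) with hC0def
  have hT : 0 ≤ (Real.sqrt 2/Real.pi)^(-β)/(β-1) :=
    div_nonneg (Real.rpow_nonneg (by positivity) _) (by linarith)
  have hC0 : 0 < C0 := by rw [hC0def]; nlinarith
  refine ⟨(1/(2*Real.pi))^(1/p) * C0^(1/p) * 2^s, ?_, ?_⟩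
  · exact mul_pos (mul_pos (Real.rpow_pos_of_pos (by positivity) _)
      (Real.rpow_pos_of_pos hC0 _)) (Real.rpow_pos_of_pos two_pos _)
  intro z hz
  rw [mem_ball_zero_iff] at hz
  refine ⟨diff_testFn p α z hz, norm_testFn_self p α z hz, ?_⟩
  intro r hr
  obtain ⟨hr0, hr1⟩ := hr
  have hx : (0:ℝ) < 1 - ‖z‖^2 := by nlinarith [norm_nonneg z]
  set a : ℝ := ‖z‖ * r with hadef
  have hz0 := norm_nonneg z
  have ha0 : 0 ≤ a := by positivity
  have ha1 : a < 1 := by nlinarith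
  have ha : 0 < 1 - a := by linarith
  -- integrand identity
  have hpt : ∀ θ : ℝ, ‖testFn p α z ((r:ℂ) * Complex.exp (θ*Complex.I))‖ ^ p
      = (1-‖z‖^2)^(s*p)
        * ‖1 - ((starRingEnd ℂ) z * r) * Complex.exp (θ*Complex.I)‖^(-β) := by
    intro θ
    rw [norm_testFn p α z _ hz]
    rw [Real.mul_rpow (Real.rpow_nonneg hx.le _) (Real.rpow_nonneg (norm_nonneg _) _)]
    congr 1
    · rw [← Real.rpow_mul hx.le]
    · rw [← Real.rpow_mul (norm_nonneg _)]
      rw [show (1:ℂ) - (starRingEnd ℂ) z * ((r:ℂ) * Complex.exp (θ*Complex.I))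
        = 1 - ((starRingEnd ℂ) z * r) * Complex.exp (θ*Complex.I) by ring]
      congr 1
      rw [hβdef]; ring
  -- norm of c
  have hcnorm : ‖(starRingEnd ℂ) z * (r:ℂ)‖ = a := by
    rw [norm_mul, RCLike.norm_conj, Complex.norm_real, Real.norm_eq_abs,
      _root_.abs_of_nonneg hr0]
  -- integral bound
  have hIa := key β hβ a ha0 ha1
  have hint : (∫ θ in (0:ℝ)..(2*Real.pi),
        ‖testFn p α z ((r:ℂ) * Complex.exp (θ*Complex.I))‖ ^ p)
      ≤ (1-‖z‖^2)^(s*p) * (C0 * (1-a)^(1-β)) := by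
    have e1 : (∫ θ in (0:ℝ)..(2*Real.pi),
          ‖testFn p α z ((r:ℂ) * Complex.exp (θ*Complex.I))‖ ^ p)
        = (1-‖z‖^2)^(s*p) * ∫ θ in (0:ℝ)..(2*Real.pi), Fa β a θ := by
      simp_rw [hpt]
      rw [intervalIntegral.integral_const_mul]
      congr 1
      have := rot β ((starRingEnd ℂ) z * (r:ℂ))
      rw [hcnorm] at this
      exact this
    rw [e1, hC0def]
    exact mul_le_mul_of_nonneg_left hIa (Real.rpow_nonneg hx.le _)
  -- Mp bound
  have hMp : Mp p r (testFn p α z)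
      ≤ (1/(2*Real.pi))^(1/p) * C0^(1/p) * ((1-‖z‖^2)^s * (1-a)^(-(s+α))) := by
    rw [Mp]
    have h2π : (0:ℝ) < 1/(2*Real.pi) := by positivity
    have hnn : (0:ℝ) ≤ (1/(2*Real.pi)) * ∫ θ in (0:ℝ)..(2*Real.pi),
        ‖testFn p α z ((r:ℂ) * Complex.exp (θ*Complex.I))‖ ^ p := by
      apply mul_nonneg h2π.le
      apply intervalIntegral.integral_nonneg (by linarith)
      intro θ _
      exact Real.rpow_nonneg (norm_nonneg _) _
    have hmono := Real.rpow_le_rpow hnn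
      (mul_le_mul_of_nonneg_left hint h2π.le) (by positivity : (0:ℝ) ≤ 1/p)
    refine le_trans hmono (le_of_eq ?_)
    rw [show (1/(2*Real.pi)) * ((1-‖z‖^2)^(s*p) * (C0 * (1-a)^(1-β)))
      = (1/(2*Real.pi)) * C0 * ((1-‖z‖^2)^(s*p) * (1-a)^(1-β)) by ring]
    rw [Real.mul_rpow (by positivity) (mul_nonneg (Real.rpow_nonneg hx.le _)
      (Real.rpow_nonneg ha.le _))]
    rw [Real.mul_rpow h2π.le hC0.le]
    rw [Real.mul_rpow (Real.rpow_nonneg hx.le _) (Real.rpow_nonneg ha.le _)]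
    rw [← Real.rpow_mul hx.le, ← Real.rpow_mul ha.le]
    congr 2
    · field_simp
    · rw [hβdef, hsdef]
      field_simp
      ring
  -- factor estimate
  have hfactor : (1-r)^α * ((1-‖z‖^2)^s * (1-a)^(-(s+α))) ≤ 2^s := by
    set A : ℝ := (1-r)^α with hAdef
    set B : ℝ := (1-‖z‖)^s with hBdef
    have hApos : 0 < A := Real.rpow_pos_of_pos (by linarith) α
    have hBpos : 0 < B := Real.rpow_pos_of_pos (by linarith) s
    have h1 : B * A ≤ (1-a)^(s+α) := by
      rw [Real.rpow_add ha]
      apply mul_le_mul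
      · exact Real.rpow_le_rpow (by linarith) (by nlinarith) hs.le
      · exact Real.rpow_le_rpow (by linarith) (by nlinarith) hα.le
      · exact hApos.le
      · exact Real.rpow_nonneg ha.le _
    have h2 : (1-a)^(-(s+α)) ≤ (B*A)⁻¹ := by
      rw [Real.rpow_neg ha.le]
      exact inv_anti₀ (by positivity) h1
    have h3 : (1-‖z‖^2)^s ≤ 2^s * B := by
      rw [hBdef, ← Real.mul_rpow (by norm_num) (by linarith)]
      exact Real.rpow_le_rpow hx.le (by nlinarith) hs.le
    calc (1-r)^α * ((1-‖z‖^2)^s * (1-a)^(-(s+α)))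
        ≤ A * ((2^s * B) * (B*A)⁻¹) := by
          apply mul_le_mul_of_nonneg_left ?_ hApos.le
          apply mul_le_mul h3 h2 (Real.rpow_nonneg ha.le _)
          positivity
      _ = 2^s := by field_simp
  -- combine
  have hKnn : (0:ℝ) ≤ (1/(2*Real.pi))^(1/p) * C0^(1/p) := by positivity
  calc (1-r)^α * Mp p r (testFn p α z)
      ≤ (1-r)^α * ((1/(2*Real.pi))^(1/p) * C0^(1/p) * ((1-‖z‖^2)^s * (1-a)^(-(s+α)))) :=
        mul_le_mul_of_nonneg_left hMp (Real.rpow_nonneg (by linarith) _)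
    _ = (1/(2*Real.pi))^(1/p) * C0^(1/p) * ((1-r)^α * ((1-‖z‖^2)^s * (1-a)^(-(s+α)))) := by
        ring
    _ ≤ (1/(2*Real.pi))^(1/p) * C0^(1/p) * 2^s := mul_le_mul_of_nonneg_left hfactor hKnn
end
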